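/- arXiv:2604.23594 — 6 statements merged into one kernel-verified Lean document; each statement's English description precedes it below -/
import Mathlib

section
/- Let q be a power of a prime p and t a positive integer. A root α of the polynomial x^{q^t} - x + 1 lies in the subfield F_{q^{tk}} if and only if p divides k. Consequently, the splitting field of x^{q^t} - x + 1 over F_{q^t} is F_{q^{pt}}. -/
lemma cast_pow_char_pow {K : Type*} [Field K] (p : ℕ) [Fact p.Prime] [CharP K p]
    (k n : ℕ) : (k : K) ^ p ^ n = (k : K) := by
  induction n with
  | zero => simp
  | succ n ih =>
    rw [pow_succ, pow_mul, ih]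
    have : (k : K) ^ p = frobenius K p (k : K) := rfl
    rw [this, map_natCast]

lemma key_lemma {K : Type*} [Field K] (p : ℕ) [Fact p.Prime] [CharP K p]
    (e t q : ℕ) (hq : q = p ^ e) (α : K) (hα : α ^ (q ^ t) = α - 1) :
    ∀ k : ℕ, α ^ (q ^ (t * k)) = α - k := by
  intro k
  induction k with
  | zero => simp
  | succ k ih =>
    have h1 : q ^ (t * (k + 1)) = q ^ (t * k) * q ^ t := by ring
    rw [h1, pow_mul, ih]
    have h2 : q ^ t = p ^ (e * t) := by rw [hq, ← pow_mul]
    rw [h2] at hα ⊢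
    rw [sub_pow_char_pow, hα, cast_pow_char_pow]
    push_cast
    ring

theorem stmt_2 (p e t q : ℕ) (hp : p.Prime) (he : 0 < e) (ht : 0 < t)
    (hq : q = p ^ e)
    (F : Type) [Field F] [Fintype F] (hF : Fintype.card F = q) :
    (∀ α : AlgebraicClosure F, α ^ (q ^ t) - α + 1 = 0 →
      ∀ k : ℕ, 0 < k → (α ^ (q ^ (t * k)) = α ↔ p ∣ k)) ∧
    (∀ α : AlgebraicClosure F, α ^ (q ^ t) - α + 1 = 0 →
      α ^ (q ^ (p * t)) = α) := by
  haveI : Fact p.Prime := ⟨hp⟩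
  -- char of F is p
  haveI hchar : CharP F p := by
    obtain ⟨r, hr⟩ := CharP.exists F
    haveI := hr
    obtain ⟨n, hrprime, hn⟩ := FiniteField.card F r
    rw [hF, hq] at hn
    have : p = r := by
      have hpr : p ∣ r ^ (n : ℕ) := hn ▸ dvd_pow_self p he.ne'
      exact ((Nat.prime_dvd_prime_iff_eq hp hrprime).mp (hp.dvd_of_dvd_pow hpr))
    exact this ▸ hr
  haveI : CharP (AlgebraicClosure F) p :=
    charP_of_injective_algebraMap (algebraMap F (AlgebraicClosure F)).injective p
  have main : ∀ α : AlgebraicClosure F, α ^ (q ^ t) - α + 1 = 0 →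
      ∀ k : ℕ, α ^ (q ^ (t * k)) = α - k := by
    intro α hα k
    exact key_lemma p e t q hq α (by linear_combination hα) k
  constructor
  · intro α hα k _
    rw [main α hα k]
    constructor
    · intro h
      have : (k : AlgebraicClosure F) = 0 := by linear_combination -h
      exact (CharP.cast_eq_zero_iff _ p k).mp this
    · intro h
      rw [(CharP.cast_eq_zero_iff (AlgebraicClosure F) p k).mpr h]
      ring
  · intro α hα
    have := main α hα p
    rw [mul_comm p t, this, CharP.cast_eq_zero]
    ring
end

section
/- Let p be a prime and q = p^e with p not dividing e. The polynomial Q(x) = x^p + x^{p-1} + ... + x - 1 is irreducible over F_q. -/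
/-!
In characteristic `p`, `Q(γ + 1) = γ ^ p + γ ^ (p - 1) - 1`, so if `α` is a root of `Q` then
`β = (α - 1)⁻¹` satisfies the Artin–Schreier equation `β ^ p = β + 1`. Iterating Frobenius gives
`β ^ (p ^ n) = β + n`; in the finite field `F⟮α⟯` of order `p ^ (e d)`, `d = [F⟮α⟯ : F]`, this
forces `p ∣ e d`, hence `p ∣ d`. So `d ≥ p = deg Q`, and `Q` is the minimal polynomial of `α`.
-/

open Polynomial Finset IntermediateField

lemma sum_Icc_one_eq_sum_range {M : Type*} [AddCommMonoid M] (f : ℕ → M) (n : ℕ) :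
    ∑ i ∈ Icc 1 n, f i = ∑ i ∈ range n, f (i + 1) := by
  rw [← Ico_add_one_right_eq_Icc, range_eq_Ico, sum_Ico_add' f 0 n 1, zero_add]

theorem inv_pow_eq_inv_add_one {K : Type*} [Field K] {γ : K} {n : ℕ} (hγ : γ ≠ 0)
    (h : γ ^ (n + 1) + γ ^ n = γ) : γ⁻¹ ^ n = γ⁻¹ + 1 := by
  have h1 : γ * γ⁻¹ = 1 := mul_inv_cancel₀ hγ
  have hn : (γ * γ⁻¹) ^ n = 1 := by rw [h1, one_pow]
  have hn1 : (γ * γ⁻¹) ^ (n + 1) = 1 := by rw [h1, one_pow]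
  -- multiply `h` by `γ⁻¹ ^ (n + 1)`
  linear_combination -γ⁻¹ ^ (n + 1) * h + hn1 + γ⁻¹ * hn - γ⁻¹ ^ n * h1

section SumIccXPow

variable {R : Type*} [Ring R] {n : ℕ}

theorem coeff_sum_Icc_X_pow_sub_one (hn : n ≠ 0) :
    ((∑ i ∈ Icc 1 n, (X : R[X]) ^ i) - 1).coeff n = 1 := by
  simp [coeff_X_pow, coeff_one, hn, Nat.one_le_iff_ne_zero.mpr hn]

theorem natDegree_sum_Icc_X_pow_sub_one_le :
    ((∑ i ∈ Icc 1 n, (X : R[X]) ^ i) - 1).natDegree ≤ n := by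
  refine (natDegree_sub_le _ _).trans (max_le ?_ (by simp))
  exact natDegree_sum_le_of_forall_le _ _ fun i hi => (natDegree_X_pow_le i).trans (mem_Icc.mp hi).2

theorem monic_sum_Icc_X_pow_sub_one (hn : n ≠ 0) :
    ((∑ i ∈ Icc 1 n, (X : R[X]) ^ i) - 1).Monic :=
  monic_of_natDegree_le_of_coeff_eq_one n natDegree_sum_Icc_X_pow_sub_one_le
    (coeff_sum_Icc_X_pow_sub_one hn)

theorem natDegree_sum_Icc_X_pow_sub_one [Nontrivial R] (hn : n ≠ 0) :
    ((∑ i ∈ Icc 1 n, (X : R[X]) ^ i) - 1).natDegree = n :=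
  natDegree_eq_of_le_of_coeff_ne_zero natDegree_sum_Icc_X_pow_sub_one_le
    (by simp [coeff_sum_Icc_X_pow_sub_one hn])

end SumIccXPow

section CharP

variable {p : ℕ} [hp : Fact p.Prime]

theorem mul_sum_Icc_add_one_pow_sub_one {R : Type*} [CommRing R] [CharP R p] (γ : R) :
    γ * (∑ i ∈ Icc 1 p, (γ + 1) ^ i - 1) = γ ^ (p + 1) + γ ^ p - γ := by
  have hgeom : γ * ∑ i ∈ range p, (γ + 1) ^ i = γ ^ p := by
    simpa [add_pow_char] using mul_geom_sum (γ + 1) p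
  simp only [sum_Icc_one_eq_sum_range, pow_succ, ← sum_mul]
  linear_combination (γ + 1) * hgeom

theorem inv_sub_one_pow_eq_add_one {L : Type*} [Field L] [CharP L p] {α : L}
    (hα : ∑ i ∈ Icc 1 p, α ^ i = 1) : (α - 1)⁻¹ ^ p = (α - 1)⁻¹ + 1 := by
  have hα1 : α - 1 ≠ 0 := by
    rintro h
    rw [sub_eq_zero.mp h] at hα
    simp at hα
  refine inv_pow_eq_inv_add_one hα1 ?_
  have h := mul_sum_Icc_add_one_pow_sub_one (p := p) (α - 1)
  rw [sub_add_cancel, hα, sub_self, mul_zero] at h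
  linear_combination -h

theorem pow_prime_pow_eq_add_natCast {R : Type*} [CommRing R] [CharP R p] {β : R}
    (hβ : β ^ p = β + 1) (n : ℕ) : β ^ p ^ n = β + n := by
  induction n with
  | zero => simp
  | succ n ih =>
    have hn : (n : R) ^ p = n := map_natCast (frobenius R p) n
    rw [pow_succ, pow_mul, ih, add_pow_char, hβ, hn]
    push_cast
    ring

theorem prime_dvd_of_pow_eq_add_one {K : Type*} [Field K] [Fintype K] [CharP K p] {m : ℕ}
    (hK : Fintype.card K = p ^ m) {β : K} (hβ : β ^ p = β + 1) : p ∣ m := by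
  have h := FiniteField.pow_card β
  rw [hK, pow_prime_pow_eq_add_natCast hβ, add_eq_left] at h
  exact (CharP.cast_eq_zero_iff K p m).mp h

theorem prime_dvd_finrank_of_pow_eq_add_one {F K : Type*} [Field F] [Fintype F] [Field K]
    [Algebra F K] [FiniteDimensional F K] {e : ℕ} (hF : Fintype.card F = p ^ e) (hpe : ¬p ∣ e)
    {β : K} (hβ : β ^ p = β + 1) : p ∣ Module.finrank F K := by
  have : CharP F p := charP_of_card_eq_prime_pow hF
  have : CharP K p := charP_of_injective_algebraMap (algebraMap F K).injective p
  have : Finite K := Module.finite_of_finite F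
  let : Fintype K := Fintype.ofFinite K
  have hK : Fintype.card K = p ^ (e * Module.finrank F K) := by
    rw [Module.card_eq_pow_finrank (K := F), hF, pow_mul]
  exact (hp.out.dvd_mul.mp (prime_dvd_of_pow_eq_add_one hK hβ)).resolve_left hpe

end CharP

theorem stmt_7_general (p e q : ℕ) (hp : p.Prime) (hpe : ¬ p ∣ e)
    (hq : q = p ^ e)
    (F : Type) [Field F] [Fintype F] (hF : Fintype.card F = q) :
    Irreducible ((∑ i ∈ Finset.Icc 1 p, (X : F[X]) ^ i) - 1) := by
  subst hq
  have : Fact p.Prime := ⟨hp⟩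
  have : CharP F p := charP_of_card_eq_prime_pow hF
  set Q : F[X] := (∑ i ∈ Icc 1 p, (X : F[X]) ^ i) - 1
  have hQ : Q.Monic := monic_sum_Icc_X_pow_sub_one hp.ne_zero
  have hQdeg : Q.natDegree = p := natDegree_sum_Icc_X_pow_sub_one hp.ne_zero
  obtain ⟨α, hα⟩ := IsAlgClosed.exists_aeval_eq_zero (AlgebraicClosure F) Q
    (by rw [degree_eq_natDegree hQ.ne_zero, hQdeg]; exact_mod_cast hp.ne_zero)
  have hint : IsIntegral F α := ⟨Q, hQ, by rwa [← aeval_def]⟩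
  have : FiniteDimensional F F⟮α⟯ := adjoin.finiteDimensional hint
  have hβ : (α - 1)⁻¹ ∈ F⟮α⟯ :=
    inv_mem (sub_mem (mem_adjoin_simple_self F α) (one_mem _))
  have hβp : ((α - 1)⁻¹) ^ p = (α - 1)⁻¹ + 1 :=
    inv_sub_one_pow_eq_add_one (by simpa [Q, sub_eq_zero] using hα)
  have hdvd : p ∣ (minpoly F α).natDegree := by
    rw [← adjoin.finrank hint]
    exact prime_dvd_finrank_of_pow_eq_add_one hF hpe (β := ⟨_, hβ⟩) (Subtype.ext hβp)
  have hQmin : Q = minpoly F α :=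
    eq_of_monic_of_dvd_of_natDegree_le (minpoly.monic hint) hQ (minpoly.dvd F α hα)
      (hQdeg ▸ Nat.le_of_dvd (minpoly.natDegree_pos hint) hdvd)
  exact hQmin ▸ minpoly.irreducible hint

theorem stmt_7 (p e q : ℕ) (hp : p.Prime) (he : 0 < e) (hpe : ¬ p ∣ e)
    (hq : q = p ^ e)
    (F : Type) [Field F] [Fintype F] (hF : Fintype.card F = q) :
    Irreducible ((∑ i ∈ Finset.Icc 1 p, (X : F[X]) ^ i) - 1) :=
  stmt_7_general p e q hp hpe hq F hF
end

section
/- Let p be a prime and q = p^e with p not dividing e. The polynomial Q(x) = x^p + x^{p-1} + ... + x - 1 over F_q is separable. -/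
/-! In characteristic `p` we have `(X - 1)^p = X^p - 1`, so the geometric sum gives
`∑_{i=1}^p X^i = X (X - 1)^(p-1)`. As `p - 1 = -1`, the derivative of `Q = X (X - 1)^(p-1) - 1`
is `-(X - 1)^(p-2)`, and `Q ≡ -1` modulo `X - 1`, so `Q` and `Q'` are coprime. -/

open Polynomial Finset

section CharP

variable {R : Type*} [CommRing R] (p : ℕ) [Fact p.Prime] [CharP R p]

theorem geom_sum_X_eq_X_sub_one_pow :
    ∑ i ∈ range p, (X : R[X]) ^ i = (X - 1) ^ (p - 1) := by
  have hp : p - 1 + 1 = p := Nat.sub_add_cancel (Fact.out : p.Prime).one_le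
  apply (monic_X_sub_C (1 : R)).isRegular.right.eq_iff.mp
  rw [C_1, geom_sum_mul, ← pow_succ, hp, sub_pow_char, one_pow]

theorem sum_Icc_one_X_pow_eq :
    ∑ i ∈ Icc 1 p, (X : R[X]) ^ i = X * (X - 1) ^ (p - 1) := by
  rw [← geom_sum_X_eq_X_sub_one_pow, mul_sum, ← Ico_add_one_right_eq_Icc, sum_Ico_eq_sum_range,
    add_tsub_cancel_right]
  simp only [add_comm 1, pow_succ']

theorem derivative_X_mul_X_sub_one_pow :
    derivative (X * (X - 1 : R[X]) ^ (p - 1)) = -(X - 1) ^ (p - 2) := by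
  obtain ⟨k, rfl⟩ : ∃ k, p = k + 2 := ⟨p - 2, by have := (Fact.out : p.Prime).two_le; omega⟩
  have hk : ((k + 1 : ℕ) : R) = -1 :=
    eq_neg_of_add_eq_zero_left (by exact_mod_cast CharP.cast_eq_zero R (k + 2))
  show derivative (X * (X - 1 : R[X]) ^ (k + 1)) = -(X - 1) ^ k
  rw [derivative_mul, derivative_X, derivative_pow, derivative_sub, derivative_X, derivative_one,
    sub_zero, mul_one, Nat.add_sub_cancel, hk, map_neg, C_1]
  ring

theorem separable_sum_Icc_one_X_pow_sub_one :
    (∑ i ∈ Icc 1 p, (X : R[X]) ^ i - 1).Separable := by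
  have hp : p - 1 = p - 2 + 1 := by have := (Fact.out : p.Prime).two_le; omega
  rw [separable_def, sum_Icc_one_X_pow_eq, derivative_sub, derivative_one, sub_zero,
    derivative_X_mul_X_sub_one_pow, hp]
  exact (IsCoprime.pow_right ⟨-1, X * (X - 1) ^ (p - 2), by ring⟩).neg_right

end CharP

theorem stmt_8_general (p e q : ℕ) (hp : p.Prime)
    (hq : q = p ^ e)
    (F : Type) [Field F] [Fintype F] (hF : Fintype.card F = q) :
    ((∑ i ∈ Finset.Icc 1 p, (X : F[X]) ^ i) - 1).Separable := by
  have : Fact p.Prime := ⟨hp⟩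
  have : CharP F p := charP_of_card_eq_prime_pow (hF.trans hq)
  exact separable_sum_Icc_one_X_pow_sub_one p

theorem stmt_8 (p e q : ℕ) (hp : p.Prime) (he : 0 < e) (hpe : ¬ p ∣ e)
    (hq : q = p ^ e)
    (F : Type) [Field F] [Fintype F] (hF : Fintype.card F = q) :
    ((∑ i ∈ Finset.Icc 1 p, (X : F[X]) ^ i) - 1).Separable :=
  stmt_8_general p e q hp hq F hF
end

section
/- Let p be a prime and F a field of characteristic p. For Q(x) = x^p + x^{p-1} + ... + x - 1 in F[x], the identity x(1-x)·Q'(x) = 1 + Q(x) holds. In particular, every root α of Q satisfies α(1-α)Q'(α) = 1. -/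
open Polynomial

section
variable {R : Type*} [CommRing R]

theorem X_mul_one_sub_X_mul_derivative_sum_Icc_pow (n : ℕ) :
    X * (1 - X) * derivative (∑ i ∈ Finset.Icc 1 n, (X : R[X]) ^ i) =
      ∑ i ∈ Finset.Icc 1 n, (X : R[X]) ^ i - (n : R[X]) * X ^ (n + 1) := by
  induction n with
  | zero => simp
  | succ n ih =>
    rw [Finset.sum_Icc_succ_top (by omega), derivative_add, mul_add, ih, derivative_X_pow,
      C_eq_natCast]
    push_cast
    ring

theorem X_mul_one_sub_X_mul_derivative_sum_Icc_pow_of_charP (p : ℕ) [CharP R p] :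
    X * (1 - X) * derivative (∑ i ∈ Finset.Icc 1 p, (X : R[X]) ^ i) =
      ∑ i ∈ Finset.Icc 1 p, (X : R[X]) ^ i := by
  rw [X_mul_one_sub_X_mul_derivative_sum_Icc_pow, CharP.cast_eq_zero, zero_mul, sub_zero]

end

theorem stmt_10_general (p : ℕ) (F : Type) [Field F] [CharP F p] :
    (X * (1 - X) * ((∑ i ∈ Finset.Icc 1 p, (X : F[X]) ^ i) - 1).derivative =
        1 + ((∑ i ∈ Finset.Icc 1 p, (X : F[X]) ^ i) - 1)) ∧
    ∀ α : F, ((∑ i ∈ Finset.Icc 1 p, (X : F[X]) ^ i) - 1).eval α = 0 →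
      α * (1 - α) *
        (((∑ i ∈ Finset.Icc 1 p, (X : F[X]) ^ i) - 1).derivative.eval α) = 1 := by
  have key : X * (1 - X) * ((∑ i ∈ Finset.Icc 1 p, (X : F[X]) ^ i) - 1).derivative =
      1 + ((∑ i ∈ Finset.Icc 1 p, (X : F[X]) ^ i) - 1) := by
    rw [derivative_sub, derivative_one, sub_zero,
      X_mul_one_sub_X_mul_derivative_sum_Icc_pow_of_charP, add_sub_cancel]
  refine ⟨key, fun α hα => ?_⟩
  have h := congrArg (eval α) key
  rwa [eval_mul, eval_mul, eval_sub, eval_one, eval_X, eval_add, hα, add_zero, eval_one] at h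

theorem stmt_10 (p : ℕ) (hp : p.Prime) (F : Type) [Field F] [CharP F p] :
    (X * (1 - X) * ((∑ i ∈ Finset.Icc 1 p, (X : F[X]) ^ i) - 1).derivative =
        1 + ((∑ i ∈ Finset.Icc 1 p, (X : F[X]) ^ i) - 1)) ∧
    ∀ α : F, ((∑ i ∈ Finset.Icc 1 p, (X : F[X]) ^ i) - 1).eval α = 0 →
      α * (1 - α) *
        (((∑ i ∈ Finset.Icc 1 p, (X : F[X]) ^ i) - 1).derivative.eval α) = 1 :=
  stmt_10_general p F
end

section
/- Let x_1, ..., x_r be pairwise distinct nonzero elements of a field K, let M be the r×r Vandermonde matrix with (i,j)-entry x_j^{i-1}, and V = M·D where D = diag(x_1,...,x_r). Then V is invertible and the sum of the entries in the i-th row of V^{-1} equals (∏_{k≠i}(1-x_k)) / (x_i · ∏_{k≠i}(x_i - x_k)). -/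
/-!
Write `V = Mᵀ D` with `M` the Vandermonde matrix of the `x j` and `D = diag(x j)`; both factors are
invertible. The vector `c j = ℓ_j(a) / x j`, where `ℓ_j` is the Lagrange basis polynomial at the
nodes `x`, satisfies `(V c)_n = ∑_j x_j^n ℓ_j(a) = a^n`, since Lagrange interpolation reproduces
`X^n` for `n < r`. Hence `V⁻¹ (a^n)_n = c`, and `a = 1` gives the row sums of `V⁻¹`.
-/

open Finset Polynomial Matrix

namespace Lagrange

variable {F ι : Type*} [Field F] [DecidableEq ι] {s : Finset ι} {v : ι → F}

theorem eval_basis (a : F) (i : ι) :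
    (Lagrange.basis s v i).eval a =
      (∏ j ∈ s.erase i, (a - v j)) / ∏ j ∈ s.erase i, (v i - v j) := by
  rw [Lagrange.basis, eval_prod, div_eq_mul_inv, ← prod_inv_distrib, ← prod_mul_distrib]
  refine prod_congr rfl fun j _ => ?_
  simp [basisDivisor, mul_comm]

theorem sum_pow_mul_eval_basis (hvs : Set.InjOn v s) {n : ℕ} (hn : n < #s) (a : F) :
    ∑ i ∈ s, v i ^ n * (Lagrange.basis s v i).eval a = a ^ n := by
  have hdeg : (X ^ n : F[X]).degree < #s := by
    rw [degree_X_pow]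
    exact_mod_cast hn
  have := congrArg (eval a) (eq_interpolate hvs hdeg)
  simpa [interpolate_apply, eval_finsetSum] using this.symm

end Lagrange

namespace Matrix

variable {K : Type*} [Field K] {r : ℕ} {x : Fin r → K}

theorem of_pow_succ_eq_vandermonde_transpose_mul_diagonal (x : Fin r → K) :
    (of fun i j : Fin r => x j ^ ((i : ℕ) + 1)) = (vandermonde x)ᵀ * diagonal x := by
  ext i j
  simp [mul_diagonal, vandermonde_apply, pow_succ]

theorem isUnit_of_pow_succ (hinj : Function.Injective x) (h0 : ∀ i, x i ≠ 0) :
    IsUnit (of fun i j : Fin r => x j ^ ((i : ℕ) + 1)) := by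
  rw [isUnit_iff_isUnit_det, of_pow_succ_eq_vandermonde_transpose_mul_diagonal, det_mul,
    det_transpose, det_diagonal, isUnit_iff_ne_zero]
  exact mul_ne_zero (det_vandermonde_ne_zero_iff.2 hinj) (prod_ne_zero_iff.2 fun i _ => h0 i)

theorem of_pow_succ_mulVec_prod_sub_div (hinj : Function.Injective x) (h0 : ∀ i, x i ≠ 0)
    (a : K) :
    (of fun i j : Fin r => x j ^ ((i : ℕ) + 1)) *ᵥ
        (fun j => (∏ k ∈ univ.erase j, (a - x k)) / (x j * ∏ k ∈ univ.erase j, (x j - x k))) =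
      fun i : Fin r => a ^ (i : ℕ) := by
  funext n
  have hterm (j : Fin r) :
      x j ^ ((n : ℕ) + 1) * ((∏ k ∈ univ.erase j, (a - x k)) /
          (x j * ∏ k ∈ univ.erase j, (x j - x k))) =
        x j ^ (n : ℕ) * (Lagrange.basis univ x j).eval a := by
    rw [Lagrange.eval_basis, pow_succ, mul_assoc, ← mul_div_assoc, mul_div_mul_left _ _ (h0 j)]
  simp only [mulVec, dotProduct, of_apply, hterm]
  simpa using Lagrange.sum_pow_mul_eval_basis (s := univ) hinj.injOn (by simp) a

end Matrix

theorem stmt_12 {K : Type} [Field K] (r : ℕ) (x : Fin r → K)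
    (hinj : Function.Injective x) (h0 : ∀ i, x i ≠ 0) :
    IsUnit (Matrix.of fun i j : Fin r => x j ^ ((i : ℕ) + 1)) ∧
    ∀ i : Fin r,
      ∑ j, (Matrix.of fun i j : Fin r => x j ^ ((i : ℕ) + 1))⁻¹ i j =
        (∏ k ∈ Finset.univ.erase i, (1 - x k)) /
          (x i * ∏ k ∈ Finset.univ.erase i, (x i - x k)) := by
  have hV := isUnit_of_pow_succ hinj h0
  refine ⟨hV, fun i => ?_⟩
  have := hV.invertible
  have hc := of_pow_succ_mulVec_prod_sub_div hinj h0 1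
  simp only [one_pow] at hc
  have := congrFun (inv_mulVec_eq_vec hc.symm) i
  rw [mulVec, dotProduct] at this
  simpa using this
end

section
/- Let q be a power of a prime p and t a positive integer with m = pt. In the field F_{q^m}, let x_1,...,x_{q^t} be the roots of L(x) = x^{q^t} - x^{q^t-1} + 1 (which splits with distinct roots in F_{q^m}). Then for every j, the quantity S_j = (∏_{k≠j}(1 - x_k)) / (x_j · ∏_{k≠j}(x_j - x_k)) equals 1. -/
/-!
The roots `x₁, …, x_n` (`n = q^t`) are all the roots of the monic `L = X^n - X^(n-1) + 1`, so
`L = ∏ₖ (X - xₖ)`. Hence `∏ₖ (1 - xₖ) = L(1) = 1` and `∏_{k ≠ j} (xⱼ - xₖ) = L'(xⱼ)`.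
Since `n^p = |E|` vanishes in `E`, so does `n`; then `L' = X^(n-2)` and `X (1 - X) L' = 1 - L`,
so `xⱼ (1 - xⱼ) L'(xⱼ) = 1`: numerator and denominator of `S_j` are both `(1 - xⱼ)⁻¹`.
-/

open Polynomial Finset Lagrange

theorem Lagrange.nodal_eq_of_monic_of_isRoot {R ι : Type*} [CommRing R] [IsDomain R]
    {s : Finset ι} {v : ι → R} {P : R[X]} (hv : Set.InjOn v s) (hP : P.Monic)
    (hdeg : P.natDegree = #s) (hroot : ∀ i ∈ s, P.IsRoot (v i)) : nodal s v = P :=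
  eq_of_degree_le_of_eval_index_eq s hv degree_nodal.le
    (by rw [degree_nodal, degree_eq_natDegree hP.ne_zero, hdeg])
    (by rw [nodal_monic.leadingCoeff, hP.leadingCoeff])
    (fun i hi => by rw [eval_nodal_at_node hi, (hroot i hi).eq_zero])

noncomputable def lTrinomial (R : Type*) [CommRing R] (n : ℕ) : R[X] := X ^ n - X ^ (n - 1) + 1

section lTrinomial

variable {R : Type*} [CommRing R]

theorem eval_one_lTrinomial (n : ℕ) : (lTrinomial R n).eval 1 = 1 := by
  simp [lTrinomial]

theorem monic_lTrinomial (n : ℕ) : (lTrinomial R n).Monic := by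
  rcases n with _ | n
  · simp [lTrinomial]
  · unfold lTrinomial
    monicity!

theorem natDegree_lTrinomial [Nontrivial R] (n : ℕ) : (lTrinomial R n).natDegree = n := by
  rcases n with _ | n
  · simp [lTrinomial]
  · unfold lTrinomial
    compute_degree!

theorem X_mul_one_sub_X_mul_derivative_lTrinomial {n : ℕ} (hn : (n : R) = 0) :
    X * (1 - X) * derivative (lTrinomial R n) = 1 - lTrinomial R n := by
  rcases n with _ | _ | k
  · simp [lTrinomial]
  · have : Subsingleton R := subsingleton_of_zero_eq_one (by simpa using hn.symm)
    exact Subsingleton.elim _ _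
  · have hk : ((k + 1 : ℕ) : R) = -1 := by
      rw [← sub_eq_zero, sub_neg_eq_add, ← hn]; push_cast; ring
    simp only [lTrinomial, derivative_add, derivative_sub, derivative_X_pow, derivative_one, hn, hk,
      map_zero, map_neg, map_one, Nat.add_sub_cancel]
    ring

theorem mul_one_sub_mul_eval_derivative_lTrinomial {n : ℕ} (hn : (n : R) = 0) {a : R} (ha : (lTrinomial R n).IsRoot a) :
    a * (1 - a) * (derivative (lTrinomial R n)).eval a = 1 := by
  simpa [ha.eq_zero] using congrArg (eval a) (X_mul_one_sub_X_mul_derivative_lTrinomial hn)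

end lTrinomial

theorem prod_erase_one_sub_div_eq_one {K ι : Type*} [Field K] [Fintype ι] [DecidableEq ι]
    {x : ι → K} (hx : Function.Injective x) (hchar : (Fintype.card ι : K) = 0)
    (hroot : ∀ i, (lTrinomial K (Fintype.card ι)).IsRoot (x i)) (j : ι) :
    (∏ k ∈ univ.erase j, (1 - x k)) / (x j * ∏ k ∈ univ.erase j, (x j - x k)) = 1 := by
  have hnodal : nodal univ x = lTrinomial K (Fintype.card ι) :=
    nodal_eq_of_monic_of_isRoot hx.injOn (monic_lTrinomial _) (natDegree_lTrinomial _)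
      fun i _ => hroot i
  have hnum : (∏ k ∈ univ.erase j, (1 - x k)) * (1 - x j) = 1 := by
    rw [prod_erase_mul _ _ (mem_univ j), ← eval_nodal, hnodal, eval_one_lTrinomial]
  have hden : (x j * ∏ k ∈ univ.erase j, (x j - x k)) * (1 - x j) = 1 := by
    rw [← eval_nodal, ← eval_nodal_derivative_eval_node_eq (mem_univ j), hnodal, mul_right_comm]
    exact mul_one_sub_mul_eval_derivative_lTrinomial hchar (hroot j)
  rw [eq_inv_of_mul_eq_one_left hnum, eq_inv_of_mul_eq_one_left hden, div_self]
  exact inv_ne_zero (right_ne_zero_of_mul_eq_one hnum)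

theorem stmt_15_general (p t q : ℕ)
    (E : Type) [Field E] [Fintype E] (hE : Fintype.card E = q ^ (p * t))
    (x : Fin (q ^ t) → E) (hinj : Function.Injective x)
    (hroot : ∀ j, x j ^ (q ^ t) - x j ^ (q ^ t - 1) + 1 = 0) :
    ∀ j, (∏ k ∈ Finset.univ.erase j, (1 - x k)) /
        (x j * ∏ k ∈ Finset.univ.erase j, (x j - x k)) = 1 := by
  have hchar : ((q ^ t : ℕ) : E) = 0 := by
    have := FiniteField.cast_card_eq_zero E
    rw [hE, pow_mul', Nat.cast_pow] at this
    exact eq_zero_of_pow_eq_zero this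
  refine prod_erase_one_sub_div_eq_one hinj (by rwa [Fintype.card_fin]) fun i => ?_
  simpa [lTrinomial] using hroot i

theorem stmt_15 (p e t q : ℕ) (hp : p.Prime) (he : 0 < e) (ht : 0 < t)
    (hq : q = p ^ e)
    (E : Type) [Field E] [Fintype E] (hE : Fintype.card E = q ^ (p * t))
    (x : Fin (q ^ t) → E) (hinj : Function.Injective x)
    (hroot : ∀ j, x j ^ (q ^ t) - x j ^ (q ^ t - 1) + 1 = 0) :
    ∀ j, (∏ k ∈ Finset.univ.erase j, (1 - x k)) /
        (x j * ∏ k ∈ Finset.univ.erase j, (x j - x k)) = 1 :=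
  stmt_15_general p t q E hE x hinj hroot
end
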